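/- arXiv:1905.06215 — 7 statements merged into one kernel-verified Lean document; each statement's English description precedes it below -/
import Mathlib

section
/- Let d be even and define s'_{2t} = C(d/2, t) / C(d, 2t) for 0 ≤ t ≤ d/2. Then ∑_{t=0}^{d/2} C(d/2, t)·s'_{2t} = 2^d / C(d, d/2). -/
/-!
Writing `d = 2m`, the `t`-th summand is `C(2t, t) C(2(m-t), m-t) / C(2m, m)`, so the claim is the
convolution identity `∑ C(2i, i) C(2j, j) = 4^m` over `i + j = m`. That identity is Chu–Vandermonde
for `-1/2 + -1/2 = -1`, because `C(-1/2, k) = (-1/4)^k C(2k, k)` and `C(-1, m) = (-1)^m`.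
-/

open Finset

theorem Ring.choose_neg_one_div_two {K : Type*} [Field K] [CharZero K] (k : ℕ) :
    Ring.choose (-1 / 2 : K) k = (-1 / 4) ^ k * k.centralBinom := by
  induction k with
  | zero => simp
  | succ k ih =>
    have hrec := Ring.choose_smul_choose (-1 / 2 : K) (k.le_add_right 1)
    have hcb : ((k + 1 : ℕ) : K) * (k + 1).centralBinom = 2 * (2 * k + 1) * k.centralBinom := by
      exact_mod_cast Nat.succ_mul_centralBinom_succ k
    rw [Nat.choose_succ_self_right, Nat.add_sub_cancel_left, Ring.choose_one_right, ih,
      nsmul_eq_mul] at hrec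
    have hk : ((k + 1 : ℕ) : K) ≠ 0 := by exact_mod_cast k.succ_ne_zero
    apply mul_left_cancel₀ hk
    rw [hrec, mul_left_comm, hcb]
    ring

theorem Nat.sum_antidiagonal_centralBinom_mul_centralBinom (n : ℕ) :
    ∑ ij ∈ antidiagonal n, ij.1.centralBinom * ij.2.centralBinom = 4 ^ n := by
  have hvdm := Ring.add_choose_eq (r := (-1 / 2 : ℚ)) (s := -1 / 2) n (Commute.refl _)
  have hneg : Ring.choose (-1 : ℚ) n = (-1) ^ n := by
    rw [Ring.choose_neg, add_sub_cancel_left, Ring.choose_natCast, Nat.choose_self, Nat.cast_one,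
      Units.smul_def, zsmul_one, Int.cast_negOnePow_natCast]
  have hpow : ∀ ij ∈ antidiagonal n, Ring.choose (-1 / 2 : ℚ) ij.1 * Ring.choose (-1 / 2) ij.2 =
      (-1 / 4) ^ n * (ij.1.centralBinom * ij.2.centralBinom : ℕ) := by
    intro ij hij
    rw [Ring.choose_neg_one_div_two, Ring.choose_neg_one_div_two, ← mem_antidiagonal.mp hij]
    push_cast
    ring
  rw [show (-1 / 2 : ℚ) + -1 / 2 = -1 by norm_num, hneg, sum_congr rfl hpow, ← mul_sum] at hvdm
  apply Nat.cast_injective (R := ℚ)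
  apply mul_left_cancel₀ (pow_ne_zero n (by norm_num : (-1 / 4 : ℚ) ≠ 0))
  rw [Nat.cast_sum, ← hvdm, Nat.cast_pow, ← mul_pow]
  norm_num

theorem Nat.choose_sq_mul_centralBinom {m t : ℕ} (ht : t ≤ m) :
    m.choose t ^ 2 * m.centralBinom =
      t.centralBinom * (m - t).centralBinom * (2 * m).choose (2 * t) := by
  have h2t : 2 * t ≤ 2 * m := by omega
  apply Nat.cast_injective (R := ℚ)
  push_cast
  rw [Nat.centralBinom_eq_two_mul_choose, Nat.centralBinom_eq_two_mul_choose,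
    Nat.centralBinom_eq_two_mul_choose, Nat.cast_choose ℚ ht, Nat.cast_choose ℚ h2t,
    Nat.cast_choose ℚ (by omega : m ≤ 2 * m), Nat.cast_choose ℚ (by omega : t ≤ 2 * t),
    Nat.cast_choose ℚ (by omega : m - t ≤ 2 * (m - t)),
    show 2 * m - 2 * t = 2 * (m - t) by omega, show 2 * m - m = m by omega,
    show 2 * t - t = t by omega, show 2 * (m - t) - (m - t) = m - t by omega]
  field_simp

theorem stmt4_general (d : ℕ) (hd : Even d) :
    ∑ t ∈ Finset.range (d / 2 + 1),
        ((d / 2).choose t : ℚ) * (((d / 2).choose t : ℚ) / (d.choose (2 * t) : ℚ)) =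
      (2 : ℚ) ^ d / (d.choose (d / 2) : ℚ) := by
  obtain ⟨m, rfl⟩ := hd
  rw [← two_mul, Nat.mul_div_cancel_left m two_pos, pow_mul, ← Nat.centralBinom_eq_two_mul_choose]
  have hterm : ∀ t ∈ range (m + 1),
      (m.choose t : ℚ) * ((m.choose t : ℚ) / ((2 * m).choose (2 * t) : ℚ)) =
        (t.centralBinom * (m - t).centralBinom : ℕ) / (m.centralBinom : ℚ) := by
    intro t hmem
    have ht : t ≤ m := Nat.lt_succ_iff.mp (mem_range.mp hmem)
    have hne : ((2 * m).choose (2 * t) : ℚ) ≠ 0 := by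
      exact_mod_cast (Nat.choose_pos (by omega)).ne'
    rw [mul_div_assoc', div_eq_div_iff hne (by exact_mod_cast m.centralBinom_ne_zero), ← sq]
    exact_mod_cast Nat.choose_sq_mul_centralBinom ht
  rw [sum_congr rfl hterm, ← sum_div, ← Nat.cast_sum,
    ← Nat.sum_antidiagonal_eq_sum_range_succ (fun i j => i.centralBinom * j.centralBinom),
    Nat.sum_antidiagonal_centralBinom_mul_centralBinom]
  norm_num

theorem stmt4 (d : ℕ) (hd : Even d) (hpos : 0 < d) :
    ∑ t ∈ Finset.range (d / 2 + 1),
        ((d / 2).choose t : ℚ) * (((d / 2).choose t : ℚ) / (d.choose (2 * t) : ℚ)) =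
      (2 : ℚ) ^ d / (d.choose (d / 2) : ℚ) :=
  stmt4_general d hd
end

section
/- Let d be even and 0 ≤ k ≤ d. The coefficient of x^{d/2} in (x−1)^k (x+1)^{d−k} equals 0 if k is odd, and equals (−1)^{k/2}·C(d, d/2)·C(d/2, k/2)/C(d, k) if k is even. -/
/-!
Up to sign, the coefficient of `x^j` in `(x - 1)^k (x + 1)^(n - k)` is the Krawtchouk number
`K_j(k)`, and these satisfy the reciprocity `C(n, k) K_j(k) = C(n, j) K_k(j)`: after expanding
both products, corresponding summands are the same multinomial coefficient. For `n = 2m` and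
`j = m` the right-hand side is a coefficient of `(x - 1)^m (x + 1)^m = (x² - 1)^m`, which is
`0` in odd degree and a signed `C(m, k/2)` in even degree.
-/

open Polynomial Finset

theorem Nat.choose_mul_choose_sub_comm (n a b : ℕ) :
    n.choose a * (n - a).choose b = n.choose b * (n - b).choose a := by
  have ha := Nat.choose_mul (n := n) (Nat.le_add_right a b)
  have hb := Nat.choose_mul (n := n) (Nat.le_add_left b a)
  rw [Nat.add_sub_cancel_left] at ha
  rw [Nat.add_sub_cancel] at hb
  rw [← ha, ← hb, Nat.choose_symm_add]

theorem Nat.choose_mul_choose_mul_choose_sub_comm (n k x : ℕ) {i : ℕ} (hik : i ≤ k)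
    (hix : i ≤ x) :
    n.choose k * k.choose i * (n - k).choose (x - i) =
      n.choose x * x.choose i * (n - x).choose (k - i) := by
  rw [Nat.choose_mul hik, Nat.choose_mul hix, mul_assoc, mul_assoc,
    show n - k = n - i - (k - i) by omega, show n - x = n - i - (x - i) by omega,
    Nat.choose_mul_choose_sub_comm]

namespace Polynomial

variable {R : Type*} [CommRing R]

theorem coeff_X_sub_one_pow (n k : ℕ) :
    ((X - 1 : R[X]) ^ n).coeff k = (-1 : R) ^ (n - k) * n.choose k := by
  rw [← coeff_X_add_C_pow, C_neg, C_1, sub_eq_add_neg]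

theorem coeff_X_sub_one_pow_mul_X_add_one_pow (k l x : ℕ) :
    ((X - 1 : R[X]) ^ k * (X + 1) ^ l).coeff x =
      ∑ i ∈ range (min k x + 1), (-1 : R) ^ (k - i) * k.choose i * l.choose (x - i) := by
  simp only [coeff_mul, Nat.sum_antidiagonal_eq_sum_range_succ_mk, coeff_X_sub_one_pow,
    coeff_X_add_one_pow]
  refine (sum_subset (range_subset_range.2 (by omega)) fun i hi hi' => ?_).symm
  simp only [mem_range] at hi hi'
  simp [Nat.choose_eq_zero_of_lt (show k < i by omega)]

theorem coeff_X_sq_sub_one_pow (m k : ℕ) :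
    ((X ^ 2 - 1 : R[X]) ^ m).coeff k =
      if Even k then (-1 : R) ^ (m - k / 2) * m.choose (k / 2) else 0 := by
  have : (X ^ 2 - 1 : R[X]) ^ m = expand R 2 ((X - 1) ^ m) := by simp
  rw [this, coeff_expand two_pos, coeff_X_sub_one_pow]
  simp only [even_iff_two_dvd]

theorem neg_one_pow_mul_choose_mul_coeff_comm (n k x : ℕ) :
    (-1 : R) ^ x * n.choose k * ((X - 1 : R[X]) ^ k * (X + 1) ^ (n - k)).coeff x =
      (-1) ^ k * n.choose x * ((X - 1 : R[X]) ^ x * (X + 1) ^ (n - x)).coeff k := by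
  rw [coeff_X_sub_one_pow_mul_X_add_one_pow, coeff_X_sub_one_pow_mul_X_add_one_pow, min_comm,
    mul_sum, mul_sum]
  refine sum_congr rfl fun i hi => ?_
  have hik : i ≤ k := by simp only [mem_range] at hi; omega
  have hix : i ≤ x := by simp only [mem_range] at hi; omega
  have hsign : (-1 : R) ^ x * (-1) ^ (k - i) = (-1) ^ k * (-1) ^ (x - i) := by
    rw [← pow_add, ← pow_add, show x + (k - i) = k + (x - i) by omega]
  have hchoose := congrArg (Nat.cast (R := R))
    (Nat.choose_mul_choose_mul_choose_sub_comm n k x hik hix)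
  push_cast at hchoose
  linear_combination (-1 : R) ^ k * (-1) ^ (x - i) * hchoose +
    (n.choose k * k.choose i * (n - k).choose (x - i) : R) * hsign

end Polynomial

theorem stmt6 (d k : ℕ) (hd : Even d) (hk : k ≤ d) :
    (((X - 1) ^ k * (X + 1) ^ (d - k) : Polynomial ℚ)).coeff (d / 2) =
      if Odd k then 0
      else (-1) ^ (k / 2) * (d.choose (d / 2) : ℚ) * ((d / 2).choose (k / 2) : ℚ) /
        (d.choose k : ℚ) := by
  obtain ⟨m, rfl⟩ := hd
  have hrec := neg_one_pow_mul_choose_mul_coeff_comm (R := ℚ) (m + m) k m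
  rw [show m + m - m = m by omega, ← mul_pow, show (X - 1 : ℚ[X]) * (X + 1) = X ^ 2 - 1 by ring,
    coeff_X_sq_sub_one_pow] at hrec
  rw [show (m + m) / 2 = m by omega]
  set c := ((X - 1 : ℚ[X]) ^ k * (X + 1) ^ (m + m - k)).coeff m
  have hC : ((m + m).choose k : ℚ) ≠ 0 := by exact_mod_cast (Nat.choose_pos hk).ne'
  split_ifs at hrec with heven
  · obtain ⟨j, rfl⟩ := heven
    rw [if_neg (by simp), eq_div_iff hC]
    rw [show (j + j) / 2 = j by omega] at hrec ⊢
    have hsign : (-1 : ℚ) ^ m * (-1) ^ m = 1 := by rw [← mul_pow]; simp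
    have hsign' : (-1 : ℚ) ^ m * (-1) ^ (j + j) * (-1) ^ (m - j) = (-1) ^ j := by
      rw [← pow_add, ← pow_add, show m + (j + j) + (m - j) = j + 2 * m by omega, pow_add, pow_mul]
      simp
    linear_combination (-1 : ℚ) ^ m * hrec - c * (m + m).choose (j + j) * hsign +
      ((m + m).choose m * m.choose j : ℚ) * hsign'
  · rw [if_pos (Nat.not_even_iff_odd.1 heven)]
    simpa [hC] using hrec
end

section
/- Let d ≥ 1 and let A be the (d+1)×(d+1) matrix with rows and columns indexed by 0,…,d, with A_{k,k+1} = d−k, A_{k,k−1} = −k, and all other entries 0. Let s ∈ ℚ^{d+1} be defined for even d by s_k = C(d/2, k/2)/C(d, k) if k is even and s_k = 0 if k is odd. Then A·s = 0. -/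
/-! Row `k` of `A s` only involves `s (k - 1)` and `s (k + 1)`. For even `k` both
neighbours are odd, so the row vanishes. For odd `k = 2j + 1 < d = 2m` the row is
`(2m - 2j - 1) s (2j + 2) - (2j + 1) s (2j)`, which vanishes because the rule
`C(n, i + 1) (i + 1) = C(n, i) (n - i)`, applied to `C(m, ·)` and `C(2m, ·)`, gives
`s (2j + 2) / s (2j) = (2j + 1) / (2m - 2j - 1)`. -/

open Matrix

theorem tridiagonal_mulVec_apply {R : Type*} [NonAssocSemiring R] {n : ℕ}
    (u v w : ℕ → R) (k : Fin (n + 1)) :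
    (Matrix.of (fun k l : Fin (n + 1) =>
        if (l : ℕ) = k + 1 then u k else if (l : ℕ) + 1 = k then v k else 0) *ᵥ
        fun l => w l) k =
      (if (k : ℕ) < n then u k * w (k + 1) else 0) +
        (if 1 ≤ (k : ℕ) then v k * w (k - 1) else 0) := by
  have split (l : ℕ) : (if l = k + 1 then u k else if l + 1 = k then v k else 0) * w l =
      (if l = k + 1 then u k * w (k + 1) else 0) +
        (if k - 1 = l then (if 1 ≤ (k : ℕ) then v k * w (k - 1) else 0) else 0) := by
    by_cases h : l = k + 1
    · simp [h]
    · by_cases h' : l + 1 = k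
      · simp [h, h', show (k : ℕ) - 1 = l by omega, show 1 ≤ (k : ℕ) by omega]
      · by_cases h'' : (k : ℕ) - 1 = l
        · simp [h, h', h'', show ¬ 1 ≤ (k : ℕ) by omega]
        · simp [h, h', h'']
  simp only [Matrix.mulVec, dotProduct, Matrix.of_apply]
  rw [Fin.sum_univ_eq_sum_range
    (fun l => (if l = k + 1 then u k else if l + 1 = k then v k else 0) * w l)]
  simp only [split, Finset.sum_add_distrib, Finset.sum_ite_eq', Finset.sum_ite_eq,
    Finset.mem_range, Nat.add_lt_add_iff_right, if_pos (show (k : ℕ) - 1 < n + 1 by omega)]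

theorem choose_div_choose_two_mul_step (m j : ℕ) (hj : j < m) :
    ((2 * m : ℕ) - (2 * j + 1 : ℕ) : ℚ) * (m.choose (j + 1) / (2 * m).choose (2 * j + 2)) =
      (2 * j + 1 : ℕ) * (m.choose j / (2 * m).choose (2 * j)) := by
  have e1 := Nat.choose_succ_right_eq m j
  have e2 := Nat.choose_succ_right_eq (2 * m) (2 * j)
  have e3 : (2 * m).choose (2 * j + 2) * (2 * j + 2) =
      (2 * m).choose (2 * j + 1) * (2 * m - (2 * j + 1)) :=
    Nat.choose_succ_right_eq (2 * m) (2 * j + 1)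
  qify [hj.le, show 2 * j ≤ 2 * m by omega, show 2 * j + 1 ≤ 2 * m by omega] at e1 e2 e3
  have c0 : ((2 * m).choose (2 * j) : ℚ) ≠ 0 := mod_cast (Nat.choose_pos (by omega)).ne'
  have c2 : ((2 * m).choose (2 * j + 2) : ℚ) ≠ 0 := mod_cast (Nat.choose_pos (by omega)).ne'
  push_cast at *
  field_simp
  refine mul_left_cancel₀ (show ((j : ℚ) + 1) * (2 * j + 2) ≠ 0 by positivity) ?_
  linear_combination ((2 * m - (2 * j + 1)) * ((2 * m).choose (2 * j) : ℚ) * (2 * j + 2)) * e1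
    - ((2 * j + 1) * (j + 1) * (m.choose j : ℚ)) * e3
    - ((j + 1) * (m.choose j : ℚ) * (2 * m - (2 * j + 1))) * e2

theorem stmt11_general (d : ℕ) (hd : Even d) :
    (Matrix.of (fun k l : Fin (d + 1) =>
        if (l : ℕ) = (k : ℕ) + 1 then ((d : ℚ) - (k : ℕ))
        else if (l : ℕ) + 1 = (k : ℕ) then -((k : ℕ) : ℚ)
        else 0)).mulVec
      (fun k : Fin (d + 1) =>
        if Even (k : ℕ) then ((d / 2).choose ((k : ℕ) / 2) : ℚ) / (d.choose (k : ℕ) : ℚ)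
        else 0) = 0 := by
  obtain ⟨m, rfl⟩ := hd.two_dvd
  funext k
  rw [tridiagonal_mulVec_apply (fun i => ((2 * m : ℕ) : ℚ) - i) (fun i => -(i : ℚ))
    (fun i => if Even i then (((2 * m) / 2).choose (i / 2) : ℚ) / ((2 * m).choose i) else 0)]
  rcases Nat.even_or_odd k with hk | ⟨j, hj⟩
  · simp +contextual [Nat.even_add_one, Nat.even_sub, hk]
  · have hjm : j < m := by omega
    simp only [hj, Pi.zero_apply, if_pos (show 2 * j + 1 < 2 * m by omega),
      if_pos (show 1 ≤ 2 * j + 1 by omega), Nat.add_sub_cancel,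
      show 2 * j + 1 + 1 = 2 * (j + 1) by ring, even_two_mul, if_true,
      Nat.mul_div_cancel_left _ two_pos]
    linear_combination choose_div_choose_two_mul_step m j hjm

theorem stmt11 (d : ℕ) (hd : Even d) (hpos : 1 ≤ d) :
    (Matrix.of (fun k l : Fin (d + 1) =>
        if (l : ℕ) = (k : ℕ) + 1 then ((d : ℚ) - (k : ℕ))
        else if (l : ℕ) + 1 = (k : ℕ) then -((k : ℕ) : ℚ)
        else 0)).mulVec
      (fun k : Fin (d + 1) =>
        if Even (k : ℕ) then ((d / 2).choose ((k : ℕ) / 2) : ℚ) / (d.choose (k : ℕ) : ℚ)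
        else 0) = 0 :=
  stmt11_general d hd
end

section
/- Let d ≥ 1 and let A be the (d+1)×(d+1) matrix with A_{k,k+1} = d−k, A_{k,k−1} = −k, other entries 0. For each 0 ≤ r ≤ d let b^{(r)} ∈ ℂ^{d+1} be the coefficient vector of (1+iz)^r(1−iz)^{d−r}, i.e. b^{(r)}_k is the coefficient of z^k. Then (b^{(r)})^T · A = (d−2r)·i·(b^{(r)})^T, i.e. b^{(r)} is a left eigenvector of A with eigenvalue (d−2r)i. -/
open Polynomial

lemma keyPoly (a b : ℕ) :
    (1 + X ^ 2) * derivative ((1 + C Complex.I * X) ^ a * (1 - C Complex.I * X) ^ b) =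
      (C ((a : ℂ) + b) * X + C (((a : ℂ) - b) * Complex.I)) *
        ((1 + C Complex.I * X) ^ a * (1 - C Complex.I * X) ^ b) := by
  have hI : (C Complex.I : ℂ[X]) * C Complex.I = -1 := by
    rw [← C_mul, Complex.I_mul_I]; simp
  have hu : C (a : ℂ) * ((1 + C Complex.I * X) * (1 + C Complex.I * X) ^ (a - 1))
      = C (a : ℂ) * (1 + C Complex.I * X) ^ a := by
    cases a with
    | zero => simp
    | succ n => rw [← pow_succ']; simp
  have hv : C (b : ℂ) * ((1 - C Complex.I * X) * (1 - C Complex.I * X) ^ (b - 1))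
      = C (b : ℂ) * (1 - C Complex.I * X) ^ b := by
    cases b with
    | zero => simp
    | succ n => rw [← pow_succ']; simp
  rw [derivative_mul, derivative_pow, derivative_pow]
  simp only [derivative_add, derivative_sub, derivative_one, derivative_mul, derivative_X,
    derivative_C, C_add, C_sub, C_mul, zero_mul, mul_one, zero_add, add_zero, zero_sub, mul_zero]
  linear_combination (C Complex.I * (1 - C Complex.I * X) * (1 - C Complex.I * X) ^ b) * hu
    - (C Complex.I * (1 + C Complex.I * X) * (1 + C Complex.I * X) ^ a) * hv
    + (X ^ 2 * C Complex.I * (C (a:ℂ) * (1 + C Complex.I * X) ^ (a-1) * (1 - C Complex.I * X) ^ b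
        - C (b:ℂ) * (1 + C Complex.I * X) ^ a * (1 - C Complex.I * X) ^ (b-1))
      - (C (a:ℂ) + C (b:ℂ)) * X * (1 + C Complex.I * X) ^ a * (1 - C Complex.I * X) ^ b) * hI

theorem stmt12 (d : ℕ) (hpos : 1 ≤ d) (r : ℕ) (hr : r ≤ d) :
    Matrix.vecMul
      (fun k : Fin (d + 1) =>
        ((1 + C Complex.I * X) ^ r * (1 - C Complex.I * X) ^ (d - r)).coeff (k : ℕ))
      (Matrix.of (fun k l : Fin (d + 1) =>
        if (l : ℕ) = (k : ℕ) + 1 then ((d : ℂ) - (k : ℕ))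
        else if (l : ℕ) + 1 = (k : ℕ) then -((k : ℕ) : ℂ)
        else 0)) =
    fun k : Fin (d + 1) =>
      ((d : ℂ) - 2 * r) * Complex.I *
        ((1 + C Complex.I * X) ^ r * (1 - C Complex.I * X) ^ (d - r)).coeff (k : ℕ) := by
  set p : ℂ[X] := (1 + C Complex.I * X) ^ r * (1 - C Complex.I * X) ^ (d - r) with hpdef
  have hdeg : p.natDegree ≤ d := by
    have h1 : ((1 + C Complex.I * X : ℂ[X])).natDegree ≤ 1 := by
      apply (natDegree_add_le _ _).trans
      simp [natDegree_C_mul_le]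
    have h2 : ((1 - C Complex.I * X : ℂ[X])).natDegree ≤ 1 := by
      apply (natDegree_sub_le _ _).trans
      simp
    calc p.natDegree ≤ ((1 + C Complex.I * X)^r : ℂ[X]).natDegree
          + ((1 - C Complex.I * X)^(d-r) : ℂ[X]).natDegree := natDegree_mul_le
      _ ≤ r * 1 + (d - r) * 1 :=
          add_le_add ((natDegree_pow_le).trans (by exact Nat.mul_le_mul_left _ h1))
            ((natDegree_pow_le).trans (by exact Nat.mul_le_mul_left _ h2))
      _ ≤ d := by omega
  have hpoly : (1 + X ^ 2) * derivative p
      = (C ((d : ℂ)) * X + C (((2 * r : ℂ) - d) * Complex.I)) * p := by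
    have h := keyPoly r (d - r)
    rw [Nat.cast_sub hr] at h
    have e1 : ((r : ℂ) + ((d : ℂ) - r)) = (d : ℂ) := by ring
    have e2 : ((r : ℂ) - ((d : ℂ) - r)) = (2 * r : ℂ) - d := by ring
    rw [e1, e2] at h
    exact h
  funext k
  obtain ⟨m, hm⟩ := k
  show ∑ j : Fin (d+1), p.coeff (j:ℕ) *
      (if m = (j:ℕ) + 1 then ((d : ℂ) - (j:ℕ)) else if m + 1 = (j:ℕ) then -(((j:ℕ)) : ℂ) else 0)
      = ((d : ℂ) - 2 * r) * Complex.I * p.coeff m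
  rw [Fin.sum_univ_eq_sum_range (fun i => p.coeff i *
      (if m = i + 1 then ((d : ℂ) - i) else if m + 1 = i then -((i : ℕ) : ℂ) else 0))]
  have hsplit : ∀ i, p.coeff i *
      (if m = i + 1 then ((d : ℂ) - i) else if m + 1 = i then -((i : ℕ) : ℂ) else 0)
      = (if i + 1 = m then p.coeff i * ((d : ℂ) - i) else 0)
        + (if i = m + 1 then p.coeff i * (-((i : ℕ) : ℂ)) else 0) := by
    intro i
    split_ifs <;> first | (exfalso; omega) | ring
  rw [Finset.sum_congr rfl (fun i _ => hsplit i), Finset.sum_add_distrib,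
    Finset.sum_ite_eq' (Finset.range (d+1)) (m+1) (fun i => p.coeff i * (-((i : ℕ) : ℂ)))]
  have hcoeff := fun n => congrArg (fun q : ℂ[X] => q.coeff n) hpoly
  simp only [coeff_add, mul_assoc, coeff_C_mul, add_mul, one_mul] at hcoeff
  have hXzero : ∀ q : ℂ[X], (X * q).coeff 0 = 0 := by
    intro q; rw [mul_coeff_zero, coeff_X_zero, zero_mul]
  rcases m with _ | n
  · -- m = 0
    have h0 : (∑ i ∈ Finset.range (d+1), if i + 1 = 0 then p.coeff i * ((d : ℂ) - i) else 0) = 0 := by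
      apply Finset.sum_eq_zero; intro i _; simp
    rw [h0]
    rw [if_pos (by simp; omega : (0+1 : ℕ) ∈ Finset.range (d+1))]
    have h1 := hcoeff 0
    have hxx : ((X:ℂ[X]) ^ 2 * derivative p).coeff 0 = 0 := by
      rw [show (X:ℂ[X])^2 * derivative p = X * (X * derivative p) by ring, hXzero]
    rw [coeff_derivative, hxx, hXzero] at h1
    push_cast at h1 ⊢
    linear_combination -h1
  · -- m = n + 1
    have hiff : ∀ i, (i + 1 = n + 1) ↔ (i = n) := by omega
    rw [Finset.sum_congr rfl (fun i _ => by rw [if_congr (hiff i) rfl rfl]),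
      Finset.sum_ite_eq' (Finset.range (d+1)) n (fun i => p.coeff i * ((d : ℂ) - i))]
    have hn : n ∈ Finset.range (d+1) := by simp; omega
    rw [if_pos hn]
    have hc2 : (if n + 1 + 1 ∈ Finset.range (d+1) then p.coeff (n+1+1) * (-(((n+1+1 : ℕ)) : ℂ)) else 0)
        = p.coeff (n+2) * (-(((n+2 : ℕ)) : ℂ)) := by
      split_ifs with h
      · push_cast; ring
      · have hz : p.coeff (n+2) = 0 := coeff_eq_zero_of_natDegree_lt
          (by simp only [Finset.mem_range] at h; omega)
        simp [hz]
    rw [hc2]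
    have h1 := hcoeff (n+1)
    have hx2 : ((X:ℂ[X]) ^ 2 * derivative p).coeff (n+1) = (n : ℂ) * p.coeff n := by
      rcases n with _ | t
      · rw [show (X:ℂ[X])^2 * derivative p = X * (X * derivative p) by ring,
          coeff_X_mul, hXzero]
        simp
      · have h := coeff_X_pow_mul (derivative p) 2 t
        rw [show t + 1 + 1 = t + 2 from rfl, h, coeff_derivative]
        push_cast; ring
    rw [coeff_X_mul, coeff_derivative, hx2] at h1
    push_cast at h1 ⊢
    linear_combination -h1
end

section
/- Let n be a positive even integer and t > 0 a real number. Then (t^{1/4} + t^{−1/4})^n + (i(t^{1/4} − t^{−1/4}))^n = 2·∑_{s=−⌊n/4⌋}^{⌊n/4⌋} C(n, n/2 + 2s)·t^{−s}, where the left-hand side is a real number (the second summand is real since n is even). -/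
/-!
With `c = t^{1/4}` and `n = 2m`, we have `i^n = (-1)^m`, so the left side is
`(c⁻¹ + c)^n + (-1)^m (c⁻¹ - c)^n`. Expanding both binomially, the `k`-th terms add up to
`(1 + (-1)^(m+k)) C(n,k) c^(n-2k)`: they cancel for `k ≢ m (mod 2)` and double for `k = m + 2s`,
where `c^(n-2k) = c^(-4s) = t^(-s)`.
-/

open Finset Complex

theorem add_pow_two_mul_add_neg_one_pow_mul_sub_pow {R : Type*} [CommRing R] (x y : R) (m : ℕ) :
    (x + y) ^ (2 * m) + (-1) ^ m * (x - y) ^ (2 * m) =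
      ∑ k ∈ range (2 * m + 1),
        (1 + (-1) ^ (m + k)) * ((2 * m).choose k * (x ^ k * y ^ (2 * m - k))) := by
  rw [sub_eq_add_neg, add_pow, add_pow, mul_sum, ← sum_add_distrib]
  refine sum_congr rfl fun k hk => ?_
  have hsign : (-1 : R) ^ m * (-1) ^ (2 * m - k) = (-1) ^ (m + k) := by
    rw [← pow_add, neg_one_pow_eq_pow_mod_two, neg_one_pow_eq_pow_mod_two (m + k)]
    have hkm := mem_range.mp hk
    congr 1
    omega
  rw [neg_pow y, ← hsign]
  ring

theorem sum_range_one_add_neg_one_pow_mul {R : Type*} [Ring R] (f : ℕ → R) (m : ℕ) :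
    ∑ k ∈ range (2 * m + 1), (1 + (-1) ^ (m + k)) * f k =
      2 * ∑ s ∈ Icc (-(m / 2 : ℕ) : ℤ) (m / 2 : ℕ), f (m + 2 * s).toNat := by
  have hterm : ∀ k, (1 + (-1 : R) ^ (m + k)) * f k = if Even (m + k) then 2 * f k else 0 := by
    intro k
    rcases Nat.even_or_odd (m + k) with h | h
    · rw [if_pos h, h.neg_one_pow, one_add_one_eq_two]
    · rw [if_neg (Nat.not_even_iff_odd.mpr h), h.neg_one_pow, add_neg_cancel, zero_mul]
  simp only [hterm]
  rw [← sum_filter, mul_sum]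
  refine sum_nbij' (fun k => ((k : ℤ) - m) / 2) (fun s => ((m : ℤ) + 2 * s).toNat)
    ?_ ?_ ?_ ?_ ?_
  all_goals intro a ha; simp only [mem_filter, mem_range, mem_Icc, Nat.even_iff] at ha ⊢
  · omega
  · omega
  · omega
  · omega
  · congr 2; omega

theorem inv_pow_mul_pow_sub {K : Type*} [DivisionRing K] {x : K} (hx : x ≠ 0) {k n : ℕ} (hk : k ≤ n) :
    x⁻¹ ^ k * x ^ (n - k) = x ^ ((n : ℤ) - 2 * k) := by
  rw [← zpow_natCast, ← zpow_natCast, inv_zpow', ← zpow_add₀ hx]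
  congr 1
  push_cast [hk]
  ring

theorem stmt15_general (n : ℕ) (hn : Even n) (t : ℝ) (ht : 0 < t) :
    ((t ^ ((1 : ℝ) / 4) + t ^ (-(1 : ℝ) / 4) : ℝ) : ℂ) ^ n +
        (Complex.I * ((t ^ ((1 : ℝ) / 4) - t ^ (-(1 : ℝ) / 4) : ℝ) : ℂ)) ^ n =
      2 * ∑ s ∈ Finset.Icc (-(n / 4 : ℕ) : ℤ) ((n / 4 : ℕ) : ℤ),
        (n.choose ((n / 2 : ℕ) + 2 * s).toNat : ℂ) * (t : ℂ) ^ (-s) := by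
  obtain ⟨m, rfl⟩ := even_iff_two_dvd.mp hn
  set c : ℝ := t ^ ((1 : ℝ) / 4)
  have hc : (c : ℂ) ≠ 0 := ofReal_ne_zero.mpr (Real.rpow_pos_of_pos ht _).ne'
  have hc4 : (c : ℂ) ^ 4 = t := by
    rw [← ofReal_pow, ← Real.rpow_natCast, ← Real.rpow_mul ht.le]
    norm_num
  have hinv : t ^ (-(1 : ℝ) / 4) = c⁻¹ := by rw [neg_div, Real.rpow_neg ht.le]
  have hI : I ^ (2 * m) = (-1) ^ m := by rw [pow_mul, I_sq]
  have hsub : ((c : ℂ) - (c : ℂ)⁻¹) ^ (2 * m) = ((c : ℂ)⁻¹ - c) ^ (2 * m) := by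
    rw [pow_mul, pow_mul, ← neg_sq, neg_sub]
  rw [hinv, ofReal_add, ofReal_sub, ofReal_inv, mul_pow, hI, hsub, add_comm (c : ℂ),
    add_pow_two_mul_add_neg_one_pow_mul_sub_pow, sum_range_one_add_neg_one_pow_mul,
    Nat.mul_div_cancel_left m two_pos, show 2 * m / 4 = m / 2 by omega]
  congr 1
  refine sum_congr rfl fun s hs => ?_
  have hs := mem_Icc.mp hs
  rw [inv_pow_mul_pow_sub hc (by omega), ← hc4, ← zpow_natCast, ← zpow_mul]
  congr 2
  omega

theorem stmt15 (n : ℕ) (hn : Even n) (hpos : 0 < n) (t : ℝ) (ht : 0 < t) :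
    ((t ^ ((1 : ℝ) / 4) + t ^ (-(1 : ℝ) / 4) : ℝ) : ℂ) ^ n +
        (Complex.I * ((t ^ ((1 : ℝ) / 4) - t ^ (-(1 : ℝ) / 4) : ℝ) : ℂ)) ^ n =
      2 * ∑ s ∈ Finset.Icc (-(n / 4 : ℕ) : ℤ) ((n / 4 : ℕ) : ℤ),
        (n.choose ((n / 2 : ℕ) + 2 * s).toNat : ℂ) * (t : ℂ) ^ (-s) :=
  stmt15_general n hn t ht
end

section
/- Let G be a finite graph with all degrees even. Then the number of Eulerian orientations of G is at least the number of half-graphs of G (spanning subgraphs H with deg_H(v) = deg_G(v)/2 for all v). -/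
open Finset

/-- `D` is an orientation of the graph `G`: a set of directed edges containing
exactly one direction of each edge of `G`. -/
def IsOrientation {V : Type*} (G : SimpleGraph V) (D : Finset (V × V)) : Prop :=
  (∀ p ∈ D, G.Adj p.1 p.2) ∧ ∀ u v, G.Adj u v → ((u, v) ∈ D ↔ (v, u) ∉ D)

/-- An orientation is Eulerian if at every vertex the out-degree equals the in-degree. -/
def IsEulerianOrientation {V : Type*} [Fintype V] [DecidableEq V] (G : SimpleGraph V)
    (D : Finset (V × V)) : Prop :=
  IsOrientation G D ∧
    ∀ v : V, (D.filter (fun p => p.1 = v)).card = (D.filter (fun p => p.2 = v)).card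

/-- `H` is a half-graph of `G`. -/
def IsHalfGraph {V : Type*} [Fintype V] [DecidableEq V] (G : SimpleGraph V)
    [DecidableRel G.Adj] (H : Finset (Sym2 V)) : Prop :=
  H ⊆ G.edgeFinset ∧ ∀ v : V, (H.filter (fun e => v ∈ e)).card = G.degree v / 2

/-!
Double counting over transition systems. A transition system `P` pairs up the darts leaving each
vertex; a half-graph `H` marks the darts whose edge lies in `H`, an orientation `D` the darts it
contains. Both markings mark half of the darts at every vertex, and any two such balanced markings
differ by a tail-preserving permutation of the darts, so they alternate with equally many `P`. It
therefore suffices to show, for each `P`, that at most as many half-graphs as Eulerian orientations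
alternate with `P`. An orientation alternating with `P` orients each closed trail of `P`; one
exists because no trail runs through an edge in both directions. Given such an orientation `D₀`
and an alternating half-graph `H₀`, reversing the edges of `H ∆ H₀` in `D₀` maps the alternating
half-graphs `H` injectively to alternating orientations, and these are Eulerian.
-/

theorem Finset.card_le_card_of_double_counting {α β γ : Type*} {s : Finset α} {t : Finset β}
    {u : Finset γ} (r : α → γ → Prop) (r' : β → γ → Prop) [∀ a c, Decidable (r a c)]
    [∀ b c, Decidable (r' b c)] {m : ℕ} (hm : 0 < m)
    (hs : ∀ a ∈ s, #(u.bipartiteAbove r a) = m) (ht : ∀ b ∈ t, #(u.bipartiteAbove r' b) = m)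
    (hu : ∀ c ∈ u, #(s.bipartiteBelow r c) ≤ #(t.bipartiteBelow r' c)) : #s ≤ #t := by
  refine Nat.le_of_mul_le_mul_right ?_ hm
  calc #s * m = ∑ c ∈ u, #(s.bipartiteBelow r c) := by
        rw [← sum_card_bipartiteAbove_eq_sum_card_bipartiteBelow, sum_congr rfl hs,
          sum_const, smul_eq_mul]
    _ ≤ ∑ c ∈ u, #(t.bipartiteBelow r' c) := sum_le_sum hu
    _ = #t * m := by
        rw [← sum_card_bipartiteAbove_eq_sum_card_bipartiteBelow, sum_congr rfl ht,
          sum_const, smul_eq_mul]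

namespace SimpleGraph

variable {V : Type*} {G : SimpleGraph V}

@[ext]
structure TransitionSystem (G : SimpleGraph V) where
  pair : G.Dart → G.Dart
  pair_pair : ∀ d, pair (pair d) = d
  fst_pair : ∀ d, (pair d).fst = d.fst
  pair_ne : ∀ d, pair d ≠ d

namespace TransitionSystem

attribute [simp] pair_pair fst_pair

instance [Fintype V] [DecidableRel G.Adj] : Finite G.TransitionSystem :=
  Finite.of_injective pair fun _ _ => TransitionSystem.ext

def Alternates (P : G.TransitionSystem) (μ : G.Dart → Prop) : Prop :=
  ∀ d, μ (P.pair d) ↔ ¬ μ d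

def conj (φ : G.Dart ≃ G.Dart) (hφ : ∀ d, (φ d).fst = d.fst) (P : G.TransitionSystem) :
    G.TransitionSystem where
  pair d := φ (P.pair (φ.symm d))
  pair_pair _ := by simp
  fst_pair d := by rw [hφ, fst_pair, ← hφ (φ.symm d), Equiv.apply_symm_apply]
  pair_ne d h := P.pair_ne (φ.symm d) (φ.eq_symm_apply.mpr h)

def conjEquiv (φ : G.Dart ≃ G.Dart) (hφ : ∀ d, (φ d).fst = d.fst) :
    G.TransitionSystem ≃ G.TransitionSystem where
  toFun := conj φ hφ
  invFun := conj φ.symm fun d => by rw [← hφ (φ.symm d), φ.apply_symm_apply]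
  left_inv P := by ext d : 2; simp [conj]
  right_inv P := by ext d : 2; simp [conj]

lemma alternates_conj_iff {μ μ' : G.Dart → Prop} (φ : G.Dart ≃ G.Dart)
    (hφ : ∀ d, (φ d).fst = d.fst) (hμ : ∀ d, μ' (φ d) ↔ μ d) (P : G.TransitionSystem) :
    (conj φ hφ P).Alternates μ' ↔ P.Alternates μ := by
  rw [Alternates, ← φ.forall_congr_right]
  simp only [conj, hμ, Equiv.symm_apply_apply]
  rfl

/-- The closed trails of `P` are the cycles of `step`: a trail arriving along `d` leaves along
`P.pair d.symm`. -/
def step (P : G.TransitionSystem) : Equiv.Perm G.Dart where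
  toFun d := P.pair d.symm
  invFun d := (P.pair d).symm
  left_inv d := by simp
  right_inv d := by simp

/-- Reversing a trail of `P` gives a trail of `P`, i.e. `(P.step d).symm = P.step.symm d.symm`,
which turns a solution `(i + 2, d)` into a solution `(i, P.step d)`. -/
lemma step_pow_ne_symm (P : G.TransitionSystem) :
    ∀ (i : ℕ) (d : G.Dart), (P.step ^ i) d ≠ d.symm
  | 0, d => d.symm_ne.symm
  | 1, d => P.pair_ne d.symm
  | i + 2, d => fun h => step_pow_ne_symm P i (P.step d) <| by
      have e : (P.step ^ (i + 2)) d = P.step ((P.step ^ i) (P.step d)) := by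
        rw [pow_succ', pow_succ, Equiv.Perm.mul_apply, Equiv.Perm.mul_apply]
      calc (P.step ^ i) (P.step d) = P.step.symm ((P.step ^ (i + 2)) d) := by
            rw [e, Equiv.symm_apply_apply]
        _ = (P.step d).symm := by rw [h]; rfl

variable [Fintype V] [DecidableRel G.Adj]

lemma not_sameCycle_symm (P : G.TransitionSystem) (d : G.Dart) :
    ¬ P.step.SameCycle d d.symm := fun h => by
  obtain ⟨i, hi⟩ := h.exists_nat_pow_eq
  exact P.step_pow_ne_symm i d hi

noncomputable instance : Fintype G.TransitionSystem := Fintype.ofFinite _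

instance (P : G.TransitionSystem) (μ : G.Dart → Prop) [DecidablePred μ] :
    Decidable (P.Alternates μ) := by
  unfold Alternates; infer_instance

end TransitionSystem

open TransitionSystem

variable [Fintype V] [DecidableEq V] [DecidableRel G.Adj] {μ μ' : G.Dart → Prop}
  [DecidablePred μ] [DecidablePred μ']

def IsBalanced (μ : G.Dart → Prop) [DecidablePred μ] : Prop :=
  ∀ v, #{d : G.Dart | d.fst = v ∧ μ d} = #{d : G.Dart | d.fst = v ∧ ¬ μ d}

lemma card_fst_eq_and_add_card_fst_eq_and_not (μ : G.Dart → Prop) [DecidablePred μ] (v : V) :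
    #{d : G.Dart | d.fst = v ∧ μ d} + #{d : G.Dart | d.fst = v ∧ ¬ μ d} = G.degree v := by
  rw [← dart_fst_fiber_card_eq_degree, ← filter_filter, ← filter_filter]
  exact card_filter_add_card_filter_not _

lemma IsBalanced.compl (h : IsBalanced μ) : IsBalanced (fun d => ¬ μ d) := by
  intro v
  simp only [not_not]
  exact (h v).symm

lemma IsBalanced.card_fiber (h : IsBalanced μ) (v : V) (b : Bool) :
    Fintype.card {d : G.Dart // (d.fst, decide (μ d)) = (v, b)} = G.degree v / 2 := by
  have hsum := card_fst_eq_and_add_card_fst_eq_and_not μ v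
  have hv := h v
  rw [Fintype.card_subtype]
  cases b <;> simp only [Prod.mk.injEq, decide_eq_true_iff, decide_eq_false_iff_not] <;> omega

lemma IsBalanced.exists_equiv (hμ : IsBalanced μ) (hμ' : IsBalanced μ') :
    ∃ φ : G.Dart ≃ G.Dart, ∀ d, (φ d).fst = d.fst ∧ (μ' (φ d) ↔ μ d) := by
  let e (c : V × Bool) : {d : G.Dart // (d.fst, decide (μ d)) = c} ≃
      {d : G.Dart // (d.fst, decide (μ' d)) = c} :=
    Fintype.equivOfCardEq (by rw [hμ.card_fiber, hμ'.card_fiber])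
  refine ⟨Equiv.ofFiberEquiv e, fun d => ?_⟩
  simpa only [Prod.mk.injEq, decide_eq_decide] using Equiv.ofFiberEquiv_map e d

lemma IsBalanced.card_alternates_eq (hμ : IsBalanced μ) (hμ' : IsBalanced μ') :
    #{P : G.TransitionSystem | P.Alternates μ} = #{P : G.TransitionSystem | P.Alternates μ'} := by
  obtain ⟨φ, hφ⟩ := hμ.exists_equiv hμ'
  refine card_equiv (conjEquiv φ fun d => (hφ d).1) fun P => ?_
  simp only [mem_filter, mem_univ, true_and]
  exact (alternates_conj_iff φ (fun d => (hφ d).1) (fun d => (hφ d).2) P).symm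

lemma IsBalanced.exists_alternates (h : IsBalanced μ) :
    ∃ P : G.TransitionSystem, P.Alternates μ := by
  obtain ⟨φ, hφ⟩ := h.exists_equiv h.compl
  have hφ_symm : ∀ d, (φ.symm d).fst = d.fst ∧ (μ (φ.symm d) ↔ ¬ μ d) := fun d => by
    have hd := hφ (φ.symm d)
    rw [φ.apply_symm_apply] at hd
    exact ⟨hd.1.symm, by tauto⟩
  let f d := if μ d then φ d else φ.symm d
  have hf : ∀ d, μ (f d) ↔ ¬ μ d := fun d => by
    by_cases hd : μ d <;> simp [f, hd, hφ, hφ_symm]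
  refine ⟨⟨f, fun d => ?_, fun d => ?_, fun d h => ?_⟩, hf⟩
  · by_cases hd : μ d
    · have hφd : ¬ μ (φ d) := (hφ d).2.mpr hd
      simp [f, hd, hφd]
    · have hφd : μ (φ.symm d) := (hφ_symm d).2.mpr hd
      simp [f, hd, hφd]
  · by_cases hd : μ d <;> simp [f, hd, hφ, hφ_symm]
  · have hfd := hf d
    rw [h] at hfd
    tauto

lemma TransitionSystem.Alternates.isBalanced {P : G.TransitionSystem} (h : P.Alternates μ) :
    IsBalanced μ := fun v =>
  card_equiv (Function.Involutive.toPerm P.pair P.pair_pair) fun d => by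
    change _ ↔ P.pair d ∈ _
    simp [h d]

lemma card_fst_eq_and_edge_mem {H : Finset (Sym2 V)} (hH : H ⊆ G.edgeFinset) (v : V) :
    #{d : G.Dart | d.fst = v ∧ d.edge ∈ H} = #{e ∈ H | v ∈ e} := by
  refine card_bij (fun d _ => d.edge) (fun d hd => ?_) (fun d₁ h₁ d₂ h₂ he => ?_)
    fun e he => ?_
  · simp only [mem_filter, mem_univ, true_and] at hd ⊢
    exact ⟨hd.2, hd.1 ▸ Sym2.mem_mk_left _ _⟩
  · simp only [mem_filter, mem_univ, true_and] at h₁ h₂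
    refine ((dart_edge_eq_iff d₁ d₂).mp he).resolve_right fun h => d₂.snd_ne_fst ?_
    rw [h] at h₁
    exact h₁.1.trans h₂.1.symm
  · obtain ⟨heH, hve⟩ := mem_filter.mp he
    obtain ⟨w, rfl⟩ := Sym2.mem_iff_exists.mp hve
    have hvw : G.Adj v w := by simpa using hH heH
    exact ⟨⟨(v, w), hvw⟩, by simpa using heH, rfl⟩

end SimpleGraph

open SimpleGraph TransitionSystem Equiv.Perm
open scoped symmDiff

section

variable {V : Type*} {G : SimpleGraph V}

lemma IsOrientation.symm_mem_iff {D : Finset (V × V)} (hD : IsOrientation G D) (d : G.Dart) :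
    d.symm.toProd ∈ D ↔ d.toProd ∉ D :=
  hD.2 _ _ d.adj.symm

variable [DecidableEq V]

lemma isOrientation_image_toProd (S : Finset G.Dart)
    (hS : ∀ d, d.symm ∈ S ↔ d ∉ S) : IsOrientation G (S.image Dart.toProd) := by
  refine ⟨fun p hp => ?_, fun u v huv => ?_⟩
  · obtain ⟨d, -, rfl⟩ := mem_image.mp hp
    exact d.adj
  · let d : G.Dart := ⟨(u, v), huv⟩
    have hd : (u, v) ∈ S.image Dart.toProd ↔ d ∈ S :=
      Dart.toProd_injective.mem_finset_image (a := d)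
    have hd' : (v, u) ∈ S.image Dart.toProd ↔ d.symm ∈ S :=
      Dart.toProd_injective.mem_finset_image (a := d.symm)
    rw [hd, hd', hS, not_not]

lemma SimpleGraph.TransitionSystem.Alternates.symmDiff {P : G.TransitionSystem}
    {H H' : Finset (Sym2 V)} (hH : P.Alternates fun d => d.edge ∈ H)
    (hH' : P.Alternates fun d => d.edge ∈ H') (d : G.Dart) :
    (P.pair d).edge ∈ H ∆ H' ↔ d.edge ∈ H ∆ H' := by
  have hHd := hH d
  have hH'd := hH' d
  simp only [mem_symmDiff]
  tauto

variable [Fintype V]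

def reverseEdges (D : Finset (V × V)) (F : Finset (Sym2 V)) : Finset (V × V) :=
  D ∆ ({p | s(p.1, p.2) ∈ F} : Finset (V × V))

lemma mem_reverseEdges {D : Finset (V × V)} {F : Finset (Sym2 V)} {p : V × V} :
    p ∈ reverseEdges D F ↔ (p ∈ D ↔ s(p.1, p.2) ∉ F) := by
  simp only [reverseEdges, mem_symmDiff, mem_filter, mem_univ, true_and]
  tauto

lemma reverseEdges_injective (D : Finset (V × V)) : Function.Injective (reverseEdges D) := by
  intro F F' h
  ext e
  induction e using Sym2.ind with
  | h u v =>
    have huv := congrArg ((u, v) ∈ ·) h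
    simp only [mem_reverseEdges, eq_iff_iff] at huv
    tauto

lemma SimpleGraph.TransitionSystem.Alternates.reverseEdges {P : G.TransitionSystem}
    {D : Finset (V × V)} {F : Finset (Sym2 V)} (hD : P.Alternates fun d => d.toProd ∈ D)
    (hF : ∀ d, (P.pair d).edge ∈ F ↔ d.edge ∈ F) :
    P.Alternates fun d => d.toProd ∈ reverseEdges D F := fun d => by
  have hDd := hD d
  have hFd := hF d
  simp only [mem_reverseEdges]
  change ((P.pair d).toProd ∈ D ↔ (P.pair d).edge ∉ F) ↔ ¬ (d.toProd ∈ D ↔ d.edge ∉ F)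
  tauto

variable [DecidableRel G.Adj]

lemma IsOrientation.reverseEdges {D : Finset (V × V)}
    {F : Finset (Sym2 V)} (hD : IsOrientation G D) (hF : F ⊆ G.edgeFinset) :
    IsOrientation G (reverseEdges D F) := by
  refine ⟨fun p hp => ?_, fun u v huv => ?_⟩
  · by_cases hpD : p ∈ D
    · exact hD.1 p hpD
    · have hpF : s(p.1, p.2) ∈ F := by have hp' := mem_reverseEdges.mp hp; tauto
      simpa using hF hpF
  · rw [mem_reverseEdges, mem_reverseEdges, Sym2.eq_swap, hD.2 u v huv]
    tauto

lemma IsHalfGraph.isBalanced {H : Finset (Sym2 V)} (hH : IsHalfGraph G H)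
    (heven : ∀ v, Even (G.degree v)) : IsBalanced fun d : G.Dart => d.edge ∈ H := fun v => by
  have hsum := card_fst_eq_and_add_card_fst_eq_and_not (fun d : G.Dart => d.edge ∈ H) v
  have hhalf := hH.2 v
  rw [← card_fst_eq_and_edge_mem hH.1] at hhalf
  obtain ⟨k, hk⟩ := heven v
  dsimp only at hsum ⊢
  omega

lemma IsOrientation.card_filter {D : Finset (V × V)} (hD : IsOrientation G D)
    (q : V × V → Prop) [DecidablePred q] :
    #{p ∈ D | q p} = #{d : G.Dart | d.toProd ∈ D ∧ q d.toProd} := by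
  refine (card_bij (fun d _ => d.toProd) (fun d hd => ?_) (fun _ _ _ _ h => Dart.toProd_injective h)
    fun p hp => ?_).symm
  · simpa using hd
  · obtain ⟨hpD, hq⟩ := mem_filter.mp hp
    exact ⟨⟨p, hD.1 p hpD⟩, by simpa using ⟨hpD, hq⟩, rfl⟩

lemma IsOrientation.isEulerianOrientation_iff {D : Finset (V × V)} (hD : IsOrientation G D) :
    IsEulerianOrientation G D ↔ IsBalanced fun d : G.Dart => d.toProd ∈ D := by
  have hout (v : V) : #{p ∈ D | p.1 = v} = #{d : G.Dart | d.fst = v ∧ d.toProd ∈ D} := by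
    rw [hD.card_filter]
    simp only [and_comm]
  have hin (v : V) : #{p ∈ D | p.2 = v} = #{d : G.Dart | d.fst = v ∧ d.toProd ∉ D} := by
    rw [hD.card_filter]
    refine card_equiv (Function.Involutive.toPerm _ Dart.symm_involutive) fun d => ?_
    simp [← hD.symm_mem_iff, and_comm]
  simp only [IsEulerianOrientation, IsBalanced, hD, true_and, hout, hin]

lemma SimpleGraph.TransitionSystem.exists_alternating_orientation (P : G.TransitionSystem) :
    ∃ D, IsOrientation G D ∧ P.Alternates fun d => d.toProd ∈ D := by
  classical
  let c : G.Dart → Quotient (SameCycle.setoid P.step) := Quotient.mk _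
  have hc_pair (d : G.Dart) : c (P.pair d) = c d.symm :=
    Quotient.sound (show P.step.SameCycle (P.step d.symm) d.symm from
      sameCycle_apply_left.mpr (.refl _ _))
  have hc_pair_symm (d : G.Dart) : c (P.pair d).symm = c d :=
    Quotient.sound (show P.step.SameCycle (P.step.symm d) d from
      sameCycle_symm_apply_left.mpr (.refl _ _))
  have hc_ne (d : G.Dart) : c d ≠ c d.symm := fun h => P.not_sameCycle_symm d (Quotient.exact h)
  -- Orient each closed trail `c d` along `d` iff it precedes its reverse `c d.symm` in a
  -- well-order of the trails.
  let S : Finset G.Dart := {d | WellOrderingRel (c d) (c d.symm)}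
  have hS (d : G.Dart) : d.symm ∈ S ↔ d ∉ S := by
    simp only [S, mem_filter, mem_univ, true_and, Dart.symm_symm]
    rcases trichotomous_of WellOrderingRel (c d) (c d.symm) with h | h | h
    · exact iff_of_false (asymm_of _ h) (not_not.mpr h)
    · exact absurd h (hc_ne d)
    · exact iff_of_true h (asymm_of _ h)
  refine ⟨_, isOrientation_image_toProd S hS, fun d => ?_⟩
  simp only [Dart.toProd_injective.mem_finset_image, ← hS]
  simp only [S, mem_filter, mem_univ, true_and, hc_pair, hc_pair_symm, Dart.symm_symm]

instance : DecidablePred (IsHalfGraph G) := fun _ => by unfold IsHalfGraph; infer_instance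

instance : DecidablePred (IsEulerianOrientation G) := fun _ => by
  unfold IsEulerianOrientation IsOrientation; infer_instance

lemma SimpleGraph.TransitionSystem.card_halfGraph_alternates_le (P : G.TransitionSystem) :
    #{H | IsHalfGraph G H ∧ P.Alternates fun d => d.edge ∈ H} ≤
      #{D | IsEulerianOrientation G D ∧ P.Alternates fun d => d.toProd ∈ D} := by
  rcases eq_empty_or_nonempty {H | IsHalfGraph G H ∧ P.Alternates fun d => d.edge ∈ H}
    with h | ⟨y, hy⟩
  · simp [h]
  obtain ⟨hy, hyP⟩ := (mem_filter.mp hy).2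
  obtain ⟨D₀, hD₀, hD₀P⟩ := P.exists_alternating_orientation
  refine card_le_card_of_injOn (fun H => reverseEdges D₀ (H ∆ y)) (fun H hH => ?_)
    fun _ _ _ _ h => symmDiff_left_injective y (reverseEdges_injective D₀ h)
  obtain ⟨hH, hHP⟩ := (mem_filter.mp hH).2
  have hF : H ∆ y ⊆ G.edgeFinset := symmDiff_le_sup.trans (sup_le hH.1 hy.1)
  have hrev := hD₀P.reverseEdges (hHP.symmDiff hyP)
  simp only [coe_filter, mem_univ, true_and, Set.mem_ofPred_eq]
  exact ⟨(hD₀.reverseEdges hF).isEulerianOrientation_iff.mpr hrev.isBalanced, hrev⟩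

end

theorem stmt18 {V : Type*} [Fintype V] [DecidableEq V] (G : SimpleGraph V)
    [DecidableRel G.Adj] (heven : ∀ v : V, Even (G.degree v)) :
    {H : Finset (Sym2 V) | IsHalfGraph G H}.ncard ≤
      {D : Finset (V × V) | IsEulerianOrientation G D}.ncard := by
  by_cases hnone : ∀ H, ¬ IsHalfGraph G H
  · simp [hnone]
  obtain ⟨H₀, hH₀⟩ := not_forall_not.mp hnone
  obtain ⟨P₀, hP₀⟩ := (hH₀.isBalanced heven).exists_alternates
  rw [Set.ncard_eq_toFinset_card', Set.ncard_eq_toFinset_card', Set.toFinset_ofPred,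
    Set.toFinset_ofPred]
  refine card_le_card_of_double_counting (u := univ)
    (m := #{P : G.TransitionSystem | P.Alternates fun d => d.edge ∈ H₀})
    (fun H (P : G.TransitionSystem) => P.Alternates fun d => d.edge ∈ H)
    (fun D P => P.Alternates fun d => d.toProd ∈ D) (card_pos.mpr ⟨P₀, by simpa using hP₀⟩)
    (fun H hH => ?_) (fun D hD => ?_) fun P _ => ?_
  · exact ((mem_filter.mp hH).2.isBalanced heven).card_alternates_eq (hH₀.isBalanced heven)
  · have hD := (mem_filter.mp hD).2
    exact (hD.1.isEulerianOrientation_iff.mp hD).card_alternates_eq (hH₀.isBalanced heven)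
  · simpa only [bipartiteBelow, filter_filter] using P.card_halfGraph_alternates_le
end

section
/- Let G be a finite graph on n vertices with even degrees d_1, …, d_n. Then the number of Eulerian orientations of G is at least ∏_{k=1}^n C(d_k, d_k/2) / 2^{d_k/2}. -/
/-!
Schrijver's splitting argument. Encode an orientation as a colouring `f` of the darts of `G`
(`f d = true` when `d` points away from its tail), Eulerian when `f d.symm = !f d` and half of
the darts at each vertex are coloured `true`. Let `N` count such colourings for a given
assignment of darts to vertices. If a vertex has `2k + 2 ≥ 4` darts, detaching an ordered pair
`(x, y)` of them into a new vertex of degree `2` leaves exactly the colourings with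
`f x ≠ f y`. Every Eulerian colouring has `2(k + 1)²` such pairs, so summing over the
`(2k + 2)(2k + 1)` pairs gives `2(k + 1)² N = ∑ N_{xy}`, and
`(k + 1) C(2k + 2, k + 1) / 2 ^ (k + 1) = (2k + 1) C(2k, k) / 2 ^ k` closes the induction.
Once every vertex has degree at most `2`, the darts are the union of two perfect matchings
`σ` (reversal) and `τ` (the other dart at the same vertex); since `σ` reverses `σ τ`, the orbits
of `σ τ` come in distinct pairs swapped by `σ`, and colouring one orbit of each pair `true`
gives an Eulerian colouring.
-/

open Finset

open Function

namespace Equiv.Perm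

variable {α : Type*} {s t : Perm α}

lemma semiconjBy_mul_of_involutive (hs : Involutive s) (ht : Involutive t) :
    SemiconjBy s (s * t) (s * t)⁻¹ := by
  ext x
  rw [mul_apply, eq_comm, mul_apply, inv_eq_iff_eq, mul_apply, mul_apply, hs, ht]

lemma apply_zpow_mul_of_involutive (hs : Involutive s) (ht : Involutive t) (i : ℤ) (x : α) :
    s (((s * t) ^ i) x) = ((s * t) ^ (-i)) (s x) := by
  rw [zpow_neg, ← inv_zpow, ← mul_apply, ((semiconjBy_mul_of_involutive hs ht).zpow_right i).eq,
    mul_apply]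

lemma not_sameCycle_mul_apply_of_involutive (hs : Involutive s) (ht : Involutive t)
    (hs' : ∀ a, s a ≠ a) (ht' : ∀ a, t a ≠ a) (a : α) : ¬ (s * t).SameCycle a (s a) := by
  rintro ⟨i, hi⟩
  obtain ⟨n, rfl | rfl⟩ := Int.even_or_odd' i
  · apply hs' (((s * t) ^ n) a)
    rw [apply_zpow_mul_of_involutive hs ht, ← hi, ← mul_apply, ← zpow_add]
    congr 2; ring
  · apply ht' (((s * t) ^ n) a)
    apply s.injective
    rw [apply_zpow_mul_of_involutive hs ht, ← hi, ← mul_apply ((s * t) ^ (-n)), ← zpow_add,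
      ← mul_apply t, ← mul_apply s, ← mul_assoc, ← zpow_one_add]
    congr 2; ring

lemma exists_bool_apply_eq_not_of_involutive [Finite α] (hs : Involutive s) (ht : Involutive t)
    (hs' : ∀ a, s a ≠ a) (ht' : ∀ a, t a ≠ a) :
    ∃ f : α → Bool, (∀ a, f (s a) = !f a) ∧ ∀ a, f (t a) = !f a := by
  let c : α → Quotient (SameCycle.setoid (s * t)) := Quotient.mk _
  obtain ⟨j, hj⟩ := Countable.exists_injective_nat (Quotient (SameCycle.setoid (s * t)))
  have hc : ∀ {a b}, (s * t).SameCycle a b → j (c a) = j (c b) :=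
    fun h => congrArg j (Quotient.sound h)
  have hne : ∀ a, j (c (s a)) ≠ j (c a) := fun a h =>
    not_sameCycle_mul_apply_of_involutive hs ht hs' ht' a (Quotient.exact (hj h)).symm
  have hflip : ∀ a, decide (j (c (s a)) < j (c a)) = !decide (j (c a) < j (c (s a))) := by
    intro a
    rcases (hne a).lt_or_gt with h | h <;> simp [h, h.not_gt]
  refine ⟨fun a => decide (j (c a) < j (c (s a))), fun a => by simp only [hs a, hflip],
    fun a => ?_⟩
  have h₁ : j (c (t a)) = j (c (s a)) := by
    simpa [ht a] using hc (sameCycle_apply_right.mpr (.refl (s * t) (t a)))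
  have h₂ : j (c (s (t a))) = j (c a) := (hc (sameCycle_apply_right.mpr (.refl _ a))).symm
  simp only [h₁, h₂, hflip]

end Equiv.Perm

noncomputable def centralBinomDivTwoPow (k : ℕ) : ℝ := (k.centralBinom : ℝ) / 2 ^ k

lemma centralBinomDivTwoPow_eq_one_of_le_one {k : ℕ} (hk : k ≤ 1) :
    centralBinomDivTwoPow k = 1 := by
  interval_cases k <;> norm_num [centralBinomDivTwoPow, Nat.centralBinom]

lemma succ_mul_centralBinomDivTwoPow_succ (k : ℕ) :
    (k + 1) * centralBinomDivTwoPow (k + 1) = (2 * k + 1) * centralBinomDivTwoPow k := by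
  have h : ((k + 1 : ℕ) : ℝ) * (k + 1).centralBinom = 2 * (2 * k + 1 : ℕ) * k.centralBinom := by
    exact_mod_cast Nat.succ_mul_centralBinom_succ k
  unfold centralBinomDivTwoPow
  push_cast at h
  rw [pow_succ]
  field_simp
  linear_combination h

lemma centralBinomDivTwoPow_half_of_even {d : ℕ} (hd : Even d) :
    centralBinomDivTwoPow (d / 2) = (d.choose (d / 2) : ℝ) / 2 ^ (d / 2) := by
  rw [centralBinomDivTwoPow, Nat.centralBinom_eq_two_mul_choose, Nat.two_mul_div_two_of_even hd]

section Balanced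

variable {α : Type*}

def IsBalanced (f : α → Bool) (s : Finset α) : Prop := #{a ∈ s | f a} = #{a ∈ s | !f a}

lemma isBalanced_empty (f : α → Bool) : IsBalanced f ∅ := rfl

lemma isBalanced_pair_iff [DecidableEq α] {f : α → Bool} {x y : α} (hxy : x ≠ y) :
    IsBalanced f {x, y} ↔ f x ≠ f y := by
  cases hx : f x <;> cases hy : f y <;>
    simp [IsBalanced, filter_insert, filter_singleton, hx, hy, hxy]

lemma IsBalanced.union_iff [DecidableEq α] {f : α → Bool} {s t : Finset α} (hst : Disjoint s t)
    (ht : IsBalanced f t) : IsBalanced f (s ∪ t) ↔ IsBalanced f s := by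
  unfold IsBalanced at *
  rw [filter_union, filter_union, card_union_of_disjoint (disjoint_filter_filter hst),
    card_union_of_disjoint (disjoint_filter_filter hst), ht, Nat.add_right_cancel_iff]

lemma IsBalanced.two_mul_card_filter {f : α → Bool} {s : Finset α} (h : IsBalanced f s) :
    2 * #{a ∈ s | f a} = #s := by
  have := card_filter_add_card_filter_not (s := s) (fun a => f a = true)
  simp only [Bool.not_eq_true] at this
  unfold IsBalanced at h
  simp only [Bool.not_eq_eq_eq_not, Bool.not_true] at h
  omega

lemma card_offDiag_filter_ne [DecidableEq α] (s : Finset α) (f : α → Bool) :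
    #{p ∈ s.offDiag | f p.1 ≠ f p.2} = 2 * (#{a ∈ s | f a} * #{a ∈ s | !f a}) := by
  have hdisj : Disjoint {a ∈ s | f a} {a ∈ s | !f a} := by
    simpa using disjoint_filter_filter_not s s (fun a => f a = true)
  have hsplit : {p ∈ s.offDiag | f p.1 ≠ f p.2} =
      {a ∈ s | f a} ×ˢ {a ∈ s | !f a} ∪ {a ∈ s | !f a} ×ˢ {a ∈ s | f a} := by
    ext ⟨a, c⟩
    cases ha : f a <;> cases hc : f c <;> simp [ha, hc] <;> grind
  rw [hsplit, card_union_of_disjoint (disjoint_product.mpr (.inl hdisj)), card_product,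
    card_product, mul_comm #{a ∈ s | !f a}, two_mul]

end Balanced

def relabelPair {α β : Type*} [DecidableEq α] (b : α → β) (x y : α) (L : β) : α → β :=
  fun a => if a = x ∨ a = y then L else b a

section EulerianColoring

variable {α β : Type*} [Fintype α] [DecidableEq β]

def fiber (b : α → β) (v : β) : Finset α := {a | b a = v}

lemma mem_fiber {b : α → β} {v : β} {a : α} : a ∈ fiber b v ↔ b a = v := by simp [fiber]

/-- `α` plays the role of the darts of a graph, `σ` reverses a dart and `b` sends it to its
tail; `f a = true` says that `a` is oriented away from `b a`. -/
def IsEulerianColoring (σ : α → α) (b : α → β) (f : α → Bool) : Prop :=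
  (∀ a, f (σ a) = !f a) ∧ ∀ v, IsBalanced f (fiber b v)

variable [DecidableEq α]

open Classical in
noncomputable def eulerianColorings (σ : α → α) (b : α → β) : Finset (α → Bool) :=
  {f | IsEulerianColoring σ b f}

variable {σ : α → α} {b : α → β}

lemma mem_eulerianColorings {f : α → Bool} :
    f ∈ eulerianColorings σ b ↔ IsEulerianColoring σ b f := by
  simp [eulerianColorings]

lemma exists_isEulerianColoring_of_card_fiber_le_two (hσ : Involutive σ) (hσ' : ∀ a, σ a ≠ a)
    (heven : ∀ v, Even #(fiber b v)) (hle : ∀ v, #(fiber b v) ≤ 2) :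
    ∃ f, IsEulerianColoring σ b f := by
  have hself : ∀ a, a ∈ fiber b (b a) := fun a => mem_fiber.mpr rfl
  have hcard : ∀ a, #((fiber b (b a)).erase a) = 1 := by
    intro a
    have := card_pos.mpr ⟨a, hself a⟩
    obtain ⟨k, hk⟩ := heven (b a)
    have := hle (b a)
    rw [card_erase_of_mem (hself a)]
    omega
  choose τ hτ using fun a => card_eq_one.mp (hcard a)
  have hfiber : ∀ a, fiber b (b a) = {a, τ a} := fun a => by
    rw [← hτ, insert_erase (hself a)]
  have hτ_mem : ∀ a, τ a ∈ (fiber b (b a)).erase a := fun a => by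
    rw [hτ]; exact mem_singleton_self _
  have hτ_ne : ∀ a, τ a ≠ a := fun a => (mem_erase.mp (hτ_mem a)).1
  have hbτ : ∀ a, b (τ a) = b a := fun a => mem_fiber.mp (mem_erase.mp (hτ_mem a)).2
  have hτ_inv : Involutive τ := fun a => by
    have := hτ_mem (τ a)
    rw [hbτ, hfiber] at this
    simp only [mem_erase, mem_insert, mem_singleton] at this
    exact this.2.resolve_right this.1
  obtain ⟨f, hfσ, hfτ⟩ := Equiv.Perm.exists_bool_apply_eq_not_of_involutive
    hσ.toPerm_involutive hτ_inv.toPerm_involutive hσ' hτ_ne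
  refine ⟨f, hfσ, fun v => ?_⟩
  by_cases hv : ∃ a, b a = v
  · obtain ⟨a, rfl⟩ := hv
    rw [hfiber, isBalanced_pair_iff (hτ_ne a).symm]
    exact fun h => by simpa using h.trans (hfτ a)
  · rw [show fiber b v = ∅ from eq_empty_of_forall_notMem fun a h => hv ⟨a, mem_fiber.mp h⟩]
    exact isBalanced_empty f

variable {x y : α} {v₀ L : β}

lemma fiber_relabelPair_self (hL : ∀ a, b a ≠ L) : fiber (relabelPair b x y L) L = {x, y} := by
  ext a
  by_cases h : a = x ∨ a = y <;> simp [mem_fiber, relabelPair, h, hL a]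

lemma fiber_relabelPair_of_ne {v : β} (hv : v ≠ L) :
    fiber (relabelPair b x y L) v = fiber b v \ {x, y} := by
  ext a
  by_cases h : a = x ∨ a = y <;> simp [mem_fiber, relabelPair, h, hv.symm]

lemma card_fiber_relabelPair_self (hxy : x ≠ y) (hL : ∀ a, b a ≠ L) :
    #(fiber (relabelPair b x y L) L) = 2 := by
  rw [fiber_relabelPair_self hL, card_pair hxy]

lemma card_fiber_relabelPair_of_mem (hx : x ∈ fiber b v₀) (hy : y ∈ fiber b v₀) (hxy : x ≠ y)
    (hL : ∀ a, b a ≠ L) : #(fiber (relabelPair b x y L) v₀) = #(fiber b v₀) - 2 := by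
  have hv₀ : v₀ ≠ L := mem_fiber.mp hx ▸ hL x
  rw [fiber_relabelPair_of_ne hv₀, card_sdiff_of_subset (insert_subset hx (by simpa using hy)),
    card_pair hxy]

lemma fiber_relabelPair_of_ne_of_ne {v : β} (hx : x ∈ fiber b v₀) (hy : y ∈ fiber b v₀)
    (hv : v ≠ v₀) (hvL : v ≠ L) : fiber (relabelPair b x y L) v = fiber b v := by
  rw [fiber_relabelPair_of_ne hvL, sdiff_eq_self_of_disjoint]
  simp only [disjoint_insert_right, disjoint_singleton_right, mem_fiber]
  exact ⟨fun h => hv (h ▸ mem_fiber.mp hx), fun h => hv (h ▸ mem_fiber.mp hy)⟩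

lemma card_sameLabel_relabelPair_lt {z : α} (hx : x ∈ fiber b v₀) (hy : y ∈ fiber b v₀)
    (hz : z ∈ fiber b v₀) (hzx : z ≠ x) (hzy : z ≠ y) (hL : ∀ a, b a ≠ L) :
    #{p : α × α | relabelPair b x y L p.1 = relabelPair b x y L p.2} <
      #{p : α × α | b p.1 = b p.2} := by
  rw [mem_fiber] at hx hy hz
  apply card_lt_card
  rw [ssubset_iff_of_subset]
  · refine ⟨(x, z), by simp [hx, hz], ?_⟩
    rw [mem_filter_univ]
    simp [relabelPair, hzx, hzy, (hL z).symm]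
  · intro p
    rw [mem_filter_univ, mem_filter_univ]
    unfold relabelPair
    split_ifs <;> grind

lemma isEulerianColoring_relabelPair_iff {f : α → Bool} (hb : b x = b y) (hxy : x ≠ y)
    (hL : ∀ a, b a ≠ L) :
    IsEulerianColoring σ (relabelPair b x y L) f ↔ IsEulerianColoring σ b f ∧ f x ≠ f y := by
  have hsplit : ∀ v, fiber b v = fiber b v \ {x, y} ∪ fiber b v ∩ {x, y} :=
    fun v => (sdiff_union_inter _ _).symm
  have hpair : f x ≠ f y → ∀ v, IsBalanced f (fiber b v ∩ {x, y}) := by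
    intro hf v
    by_cases hv : b x = v
    · rwa [inter_eq_right.mpr, isBalanced_pair_iff hxy]
      simp [insert_subset_iff, mem_fiber, ← hv, hb]
    · rw [disjoint_iff_inter_eq_empty.mp]
      · exact isBalanced_empty f
      · simp [disjoint_insert_right, mem_fiber, hv, ← hb]
  have hempty : fiber b L = ∅ := eq_empty_of_forall_notMem fun a => by simp [mem_fiber, hL a]
  unfold IsEulerianColoring
  constructor
  · rintro ⟨hσ, hbal⟩
    have hf : f x ≠ f y := by
      simpa [fiber_relabelPair_self hL, isBalanced_pair_iff hxy] using hbal L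
    refine ⟨⟨hσ, fun v => ?_⟩, hf⟩
    by_cases hv : v = L
    · rw [hv, hempty]; exact isBalanced_empty f
    · rw [hsplit, (hpair hf v).union_iff (disjoint_sdiff_inter _ _),
        ← fiber_relabelPair_of_ne hv]
      exact hbal v
  · rintro ⟨⟨hσ, hbal⟩, hf⟩
    refine ⟨hσ, fun v => ?_⟩
    by_cases hv : v = L
    · rw [hv, fiber_relabelPair_self hL, isBalanced_pair_iff hxy]; exact hf
    · rw [fiber_relabelPair_of_ne hv, ← (hpair hf v).union_iff (disjoint_sdiff_inter _ _),
        ← hsplit]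
      exact hbal v

lemma eulerianColorings_relabelPair (hb : b x = b y) (hxy : x ≠ y) (hL : ∀ a, b a ≠ L) :
    eulerianColorings σ (relabelPair b x y L) = {f ∈ eulerianColorings σ b | f x ≠ f y} := by
  ext f
  rw [mem_filter, mem_eulerianColorings, mem_eulerianColorings,
    isEulerianColoring_relabelPair_iff hb hxy hL]

lemma sum_card_eulerianColorings_relabelPair {m : ℕ} (hv₀ : #(fiber b v₀) = 2 * m)
    (hL : ∀ a, b a ≠ L) :
    ∑ p ∈ (fiber b v₀).offDiag, #(eulerianColorings σ (relabelPair b p.1 p.2 L)) =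
      2 * (m * m) * #(eulerianColorings σ b) := by
  have hpairs : ∀ f ∈ eulerianColorings σ b, #{p ∈ (fiber b v₀).offDiag | f p.1 ≠ f p.2} =
      2 * (m * m) := by
    intro f hf
    have hbal := (mem_eulerianColorings.mp hf).2 v₀
    have htrue := hbal.two_mul_card_filter
    rw [card_offDiag_filter_ne, ← hbal]
    congr 2 <;> omega
  calc ∑ p ∈ (fiber b v₀).offDiag, #(eulerianColorings σ (relabelPair b p.1 p.2 L))
      = ∑ p ∈ (fiber b v₀).offDiag,
          #((eulerianColorings σ b).bipartiteAbove (fun p f => f p.1 ≠ f p.2) p) := by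
        refine sum_congr rfl fun p hp => ?_
        obtain ⟨hx, hy, hxy⟩ := mem_offDiag.mp hp
        rw [eulerianColorings_relabelPair ((mem_fiber.mp hx).trans (mem_fiber.mp hy).symm)
          hxy hL]
        rfl
    _ = ∑ f ∈ eulerianColorings σ b, #{p ∈ (fiber b v₀).offDiag | f p.1 ≠ f p.2} :=
        sum_card_bipartiteAbove_eq_sum_card_bipartiteBelow _
    _ = 2 * (m * m) * #(eulerianColorings σ b) := by
        rw [sum_congr rfl hpairs, sum_const, smul_eq_mul, mul_comm]

lemma prod_le_card_eulerianColorings_of_relabelPair {S : Finset β} {k : ℕ}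
    (hS : ∀ a, b a ∈ S) (hv₀ : #(fiber b v₀) = 2 * (k + 1)) (hv₀S : v₀ ∈ S) (hLS : L ∉ S)
    (h : ∀ p ∈ (fiber b v₀).offDiag,
      ∏ v ∈ insert L S, centralBinomDivTwoPow (#(fiber (relabelPair b p.1 p.2 L) v) / 2) ≤
        #(eulerianColorings σ (relabelPair b p.1 p.2 L))) :
    ∏ v ∈ S, centralBinomDivTwoPow (#(fiber b v) / 2) ≤ #(eulerianColorings σ b) := by
  have hL : ∀ a, b a ≠ L := fun a h => hLS (h ▸ hS a)
  set R := ∏ v ∈ S.erase v₀, centralBinomDivTwoPow (#(fiber b v) / 2)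
  have hsplit : ∀ p ∈ (fiber b v₀).offDiag,
      ∏ v ∈ insert L S, centralBinomDivTwoPow (#(fiber (relabelPair b p.1 p.2 L) v) / 2) =
        centralBinomDivTwoPow k * R := by
    intro p hp
    obtain ⟨hx, hy, hxy⟩ := mem_offDiag.mp hp
    rw [prod_insert hLS, card_fiber_relabelPair_self hxy hL, ← mul_prod_erase _ _ hv₀S,
      card_fiber_relabelPair_of_mem hx hy hxy hL, hv₀,
      centralBinomDivTwoPow_eq_one_of_le_one le_rfl, one_mul,
      show (2 * (k + 1) - 2) / 2 = k by omega]
    congr 1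
    refine prod_congr rfl fun v hv => ?_
    have hvL : v ≠ L := by rintro rfl; exact hLS (mem_of_mem_erase hv)
    rw [fiber_relabelPair_of_ne_of_ne hx hy (ne_of_mem_erase hv) hvL]
  have hsum : ((2 * (k + 1)) * (2 * k + 1) : ℝ) * (centralBinomDivTwoPow k * R) ≤
      2 * ((k + 1) * (k + 1)) * #(eulerianColorings σ b) := by
    have hcard : #(fiber b v₀).offDiag = 2 * (k + 1) * (2 * k + 1) := by
      rw [offDiag_card, hv₀]
      exact Nat.sub_eq_of_eq_add (by ring)
    calc ((2 * (k + 1)) * (2 * k + 1) : ℝ) * (centralBinomDivTwoPow k * R)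
        = ∑ p ∈ (fiber b v₀).offDiag, centralBinomDivTwoPow k * R := by
          rw [sum_const, hcard, nsmul_eq_mul]; push_cast; ring
      _ ≤ ∑ p ∈ (fiber b v₀).offDiag, (#(eulerianColorings σ (relabelPair b p.1 p.2 L)) : ℝ) :=
          sum_le_sum fun p hp => hsplit p hp ▸ h p hp
      _ = 2 * ((k + 1) * (k + 1)) * #(eulerianColorings σ b) := by
          exact_mod_cast sum_card_eulerianColorings_relabelPair hv₀ hL
  rw [← mul_prod_erase _ _ hv₀S, hv₀, show 2 * (k + 1) / 2 = k + 1 by omega]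
  refine (mul_le_mul_iff_of_pos_left (a := 2 * ((k + 1) * (k + 1) : ℝ)) (by positivity)).mp
    (le_of_eq_of_le ?_ hsum)
  linear_combination (2 * (k + 1) * R) * succ_mul_centralBinomDivTwoPow_succ k

theorem prod_centralBinomDivTwoPow_le_card_eulerianColorings_of_infinite [Infinite β]
    (hσ : Involutive σ) (hσ' : ∀ a, σ a ≠ a) (b : α → β) (heven : ∀ v, Even #(fiber b v))
    (S : Finset β) (hS : ∀ a, b a ∈ S) :
    ∏ v ∈ S, centralBinomDivTwoPow (#(fiber b v) / 2) ≤ #(eulerianColorings σ b) := by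
  induction hn : #{p : α × α | b p.1 = b p.2} using Nat.strong_induction_on generalizing b S with
  | _ n ih =>
  by_cases hle : ∀ v, #(fiber b v) ≤ 2
  · obtain ⟨f, hf⟩ := exists_isEulerianColoring_of_card_fiber_le_two hσ hσ' heven hle
    rw [prod_eq_one fun v _ => centralBinomDivTwoPow_eq_one_of_le_one (by have := hle v; omega)]
    exact_mod_cast card_pos.mpr ⟨f, mem_eulerianColorings.mpr hf⟩
  obtain ⟨v₀, hv₀⟩ := not_forall.mp hle
  obtain ⟨k, hk⟩ : ∃ k, #(fiber b v₀) = 2 * (k + 1) := by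
    obtain ⟨m, hm⟩ := heven v₀
    exact ⟨m - 1, by omega⟩
  obtain ⟨L, hLS⟩ := Infinite.exists_notMem_finset S
  have hL : ∀ a, b a ≠ L := fun a h => hLS (h ▸ hS a)
  obtain ⟨a₀, ha₀⟩ := card_pos.mp (by omega : 0 < #(fiber b v₀))
  refine prod_le_card_eulerianColorings_of_relabelPair hS hk (mem_fiber.mp ha₀ ▸ hS a₀) hLS
    fun p hp => ?_
  obtain ⟨hx, hy, hxy⟩ := mem_offDiag.mp hp
  obtain ⟨z, hz, hzxy⟩ : ∃ z ∈ fiber b v₀, z ∉ ({p.1, p.2} : Finset α) := by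
    refine exists_mem_notMem_of_card_lt_card ?_
    rw [card_pair hxy]; omega
  simp only [mem_insert, mem_singleton, not_or] at hzxy
  refine ih _ (hn ▸ card_sameLabel_relabelPair_lt hx hy hz hzxy.1 hzxy.2 hL) _ (fun v => ?_) _
    (fun a => ?_) rfl
  · by_cases hvL : v = L
    · rw [hvL, card_fiber_relabelPair_self hxy hL]; exact even_two
    by_cases hv : v = v₀
    · rw [hv, card_fiber_relabelPair_of_mem hx hy hxy hL, hk]; exact ⟨k, by omega⟩
    · rw [fiber_relabelPair_of_ne_of_ne hx hy hv hvL]; exact heven v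
  · unfold relabelPair
    split_ifs
    · exact mem_insert_self L S
    · exact mem_insert_of_mem (hS a)

end EulerianColoring

section CompInjective

variable {α β γ : Type*} [Fintype α] [DecidableEq γ] {b : α → β} {i : β → γ}

lemma fiber_comp_of_forall_ne {w : γ} (hw : ∀ v, i v ≠ w) : fiber (i ∘ b) w = ∅ :=
  eq_empty_of_forall_notMem fun a h => hw (b a) (mem_fiber.mp h :)

variable [DecidableEq β]

lemma fiber_comp_apply (hi : Injective i) (v : β) : fiber (i ∘ b) (i v) = fiber b v := by
  ext a; simp [mem_fiber, hi.eq_iff]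

lemma isEulerianColoring_comp_iff {σ : α → α} (hi : Injective i) {f : α → Bool} :
    IsEulerianColoring σ (i ∘ b) f ↔ IsEulerianColoring σ b f := by
  refine and_congr_right fun _ => ⟨fun h v => ?_, fun h w => ?_⟩
  · rw [← fiber_comp_apply hi]; exact h (i v)
  by_cases hw : ∃ v, i v = w
  · obtain ⟨v, rfl⟩ := hw
    rw [fiber_comp_apply hi]; exact h v
  · rw [fiber_comp_of_forall_ne (not_exists.mp hw)]; exact isBalanced_empty f

theorem prod_centralBinomDivTwoPow_le_card_eulerianColorings [DecidableEq α] {σ : α → α}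
    (hσ : Involutive σ) (hσ' : ∀ a, σ a ≠ a) (b : α → β) (heven : ∀ v, Even #(fiber b v))
    (S : Finset β) (hS : ∀ a, b a ∈ S) :
    ∏ v ∈ S, centralBinomDivTwoPow (#(fiber b v) / 2) ≤ #(eulerianColorings σ b) := by
  have hinl : Injective (Sum.inl : β → β ⊕ ℕ) := Sum.inl_injective
  have h := prod_centralBinomDivTwoPow_le_card_eulerianColorings_of_infinite hσ hσ'
    ((Sum.inl : β → β ⊕ ℕ) ∘ b) (fun w => ?_) (S.map ⟨Sum.inl, hinl⟩)
    (fun a => mem_map_of_mem _ (hS a))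
  · have hE : eulerianColorings σ ((Sum.inl : β → β ⊕ ℕ) ∘ b) = eulerianColorings σ b := by
      ext f; simp only [mem_eulerianColorings, isEulerianColoring_comp_iff hinl]
    simpa [prod_map, fiber_comp_apply hinl, hE] using h
  · by_cases hw : ∃ v, Sum.inl v = w
    · obtain ⟨v, rfl⟩ := hw
      rw [fiber_comp_apply hinl]; exact heven v
    · rw [fiber_comp_of_forall_ne (not_exists.mp hw), card_empty]; exact ⟨0, rfl⟩

end CompInjective

namespace SimpleGraph

variable {V : Type*} [Fintype V] {G : SimpleGraph V} [DecidableRel G.Adj]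

def orientationOfColoring (f : G.Dart → Bool) : Finset (V × V) :=
  (univ.filter fun d => f d).map ⟨Dart.toProd, Dart.toProd_injective⟩

lemma toProd_mem_orientationOfColoring {f : G.Dart → Bool} {d : G.Dart} :
    d.toProd ∈ orientationOfColoring f ↔ f d := by
  simp [orientationOfColoring]

lemma orientationOfColoring_injective :
    Injective (orientationOfColoring : (G.Dart → Bool) → Finset (V × V)) := by
  intro f g h
  funext d
  have := congrArg (d.toProd ∈ ·) h
  simp only [toProd_mem_orientationOfColoring, eq_iff_iff] at this
  exact Bool.eq_iff_iff.mpr this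

lemma card_filter_orientationOfColoring (f : G.Dart → Bool) (P : V × V → Prop)
    [DecidablePred P] :
    #((orientationOfColoring f).filter P) = #{d : G.Dart | f d ∧ P d.toProd} := by
  rw [orientationOfColoring, filter_map, card_map, filter_filter]
  rfl

variable [DecidableEq V]

lemma isEulerianOrientation_orientationOfColoring {f : G.Dart → Bool}
    (hf : IsEulerianColoring Dart.symm (fun d : G.Dart => d.fst) f) :
    IsEulerianOrientation G (orientationOfColoring f) := by
  obtain ⟨hsymm, hbal⟩ := hf
  have hmem : ∀ {u v} (h : G.Adj u v), (u, v) ∈ orientationOfColoring f ↔ f ⟨(u, v), h⟩ :=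
    fun h => toProd_mem_orientationOfColoring (d := ⟨_, h⟩)
  refine ⟨⟨fun p hp => ?_, fun u v h => ?_⟩, fun v => ?_⟩
  · obtain ⟨d, -, rfl⟩ := mem_map.mp hp
    exact d.adj
  · rw [hmem h, hmem h.symm, show (⟨(v, u), h.symm⟩ : G.Dart) = Dart.symm ⟨(u, v), h⟩ from rfl,
      hsymm]
    cases f ⟨(u, v), h⟩ <;> simp
  · have hout : #{d : G.Dart | f d ∧ d.fst = v} =
        #{a ∈ fiber (fun d : G.Dart => d.fst) v | f a} := by
      simp only [fiber, filter_filter, and_comm]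
    have hin : #{d : G.Dart | f d ∧ d.snd = v} =
        #{a ∈ fiber (fun d : G.Dart => d.fst) v | !f a} := by
      simp only [fiber, filter_filter]
      refine card_bij' (fun d _ => d.symm) (fun d _ => d.symm) ?_ ?_ ?_ ?_ <;>
        simp +contextual [hsymm]
    rw [card_filter_orientationOfColoring, card_filter_orientationOfColoring, hout, hin]
    exact hbal v

lemma card_eulerianColorings_le_ncard_isEulerianOrientation :
    #(eulerianColorings Dart.symm fun d : G.Dart => d.fst) ≤
      {D : Finset (V × V) | IsEulerianOrientation G D}.ncard := by
  rw [← Set.ncard_coe_finset]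
  exact Set.ncard_le_ncard_of_injOn orientationOfColoring
    (fun f hf => isEulerianOrientation_orientationOfColoring (mem_eulerianColorings.mp hf))
    orientationOfColoring_injective.injOn (Set.toFinite _)

end SimpleGraph

theorem stmt19 {V : Type*} [Fintype V] [DecidableEq V] (G : SimpleGraph V)
    [DecidableRel G.Adj] (heven : ∀ v : V, Even (G.degree v)) :
    (∏ v : V, ((G.degree v).choose (G.degree v / 2) : ℝ) / 2 ^ (G.degree v / 2)) ≤
      ({D : Finset (V × V) | IsEulerianOrientation G D}.ncard : ℝ) := by
  have hdeg : ∀ v, #(fiber (fun d : G.Dart => d.fst) v) = G.degree v :=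
    G.dart_fst_fiber_card_eq_degree
  calc (∏ v : V, ((G.degree v).choose (G.degree v / 2) : ℝ) / 2 ^ (G.degree v / 2))
      = ∏ v : V, centralBinomDivTwoPow (#(fiber (fun d : G.Dart => d.fst) v) / 2) := by
        simp only [hdeg, centralBinomDivTwoPow_half_of_even (heven _)]
    _ ≤ #(eulerianColorings SimpleGraph.Dart.symm fun d : G.Dart => d.fst) :=
        prod_centralBinomDivTwoPow_le_card_eulerianColorings SimpleGraph.Dart.symm_involutive
          SimpleGraph.Dart.symm_ne _ (fun v => hdeg v ▸ heven v) univ fun _ => mem_univ _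
    _ ≤ _ := by exact_mod_cast G.card_eulerianColorings_le_ncard_isEulerianOrientation
end
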